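/- arXiv:1103.5019 — 2 statements merged into one kernel-verified Lean document; each statement's English description precedes it below -/
import Mathlib

section
/- Let l ≥ 1, n ≥ 1, let |·| be a norm on ℂ^n, and let T be a power bounded linear operator on (ℂ^n, |·|) having n distinct eigenvalues λ_1, …, λ_n, all in the open unit disc 𝔻, with associated Malmquist family (e_k)_{1≤k≤n} and projection P_{B_σ}. Then for every λ ∈ ℂ with |λ| > 1, ‖(λI − T)^{−l}‖ ≤ P(T) · |λ|^{−l} · ‖P_{B_σ}((k_{1/λ̄})^l)‖_W, where k_{1/λ̄}(z) = 1/(1 − z/λ). -/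
/-!
With `B_k = ∏_{j<k} b_{λ_j}` one has
`(1 - conj w · z) · conj (e_k w) · e_k z = conj (B_k w) · B_k z - conj (B_{k+1} w) · B_{k+1} z`,
so `∑_k conj (e_k λ_j) · e_k` telescopes to the Szegő kernel `1 / (1 - conj λ_j · z)` because
`B_n (λ_j) = 0`, and the Cauchy formula gives `P_{B_σ} g (λ_j) = g (λ_j)` for `g = (k_{1/μ̄})^l`.
Since `h = P_{B_σ} g` is holomorphic on a disc of radius `R > 1`, its Taylor coefficients `a_m`
are absolutely summable, and `S = ∑ a_m T^m` has `‖S‖ ≤ P(T) ‖h‖_W`. On an eigenbasis of `T`,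
both `(μ - T)^{-l}` and `μ^{-l} S` act by `(μ - λ_j)^{-l} = μ^{-l} g (λ_j) = μ^{-l} h (λ_j)`.
-/

open Real

/-- The elementary Blaschke factor `b_a(z) = (a - z)/(1 - ā z)`. -/
noncomputable def blaschkeFactor (a z : ℂ) : ℂ := (a - z) / (1 - (starRingEnd ℂ) a * z)

/-- The Malmquist family associated with `λ_1, …, λ_n ∈ 𝔻`:
`e_k(z) = (∏_{j<k} b_{λ_j}(z)) · (1 - |λ_k|²)^{1/2} / (1 - conj(λ_k) z)`. -/
noncomputable def malmquist {n : ℕ} (lam : Fin n → ℂ) (k : Fin n) (z : ℂ) : ℂ :=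
  (∏ j ∈ Finset.Iio k, blaschkeFactor (lam j) z) *
    ((Real.sqrt (1 - ‖lam k‖ ^ 2) : ℂ) / (1 - (starRingEnd ℂ) (lam k) * z))

/-- The `H²` inner product `⟨u, v⟩ = ∫_𝕋 u conj(v) dm` (normalized Lebesgue measure). -/
noncomputable def h2inner (u v : ℂ → ℂ) : ℂ :=
  (2 * π)⁻¹ • ∫ θ in (0:ℝ)..(2 * π),
    u (Complex.exp (θ * Complex.I)) * (starRingEnd ℂ) (v (Complex.exp (θ * Complex.I)))

/-- The orthogonal projection onto the model space `K_{B_σ}` expressed via the Malmquist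
basis: `P_{B_σ} g = ∑_k ⟨g, e_k⟩_{H²} e_k`. -/
noncomputable def projMalmquist {n : ℕ} (lam : Fin n → ℂ) (g : ℂ → ℂ) (z : ℂ) : ℂ :=
  ∑ k : Fin n, h2inner g (malmquist lam k) * malmquist lam k z

/-- The Wiener algebra norm `‖h‖_W = ∑_{m≥0} |ĥ(m)|`, the Taylor coefficients of `h` at `0`
being `iteratedDeriv m h 0 / m!`. -/
noncomputable def wienerNorm (h : ℂ → ℂ) : ℝ :=
  ∑' m : ℕ, ‖iteratedDeriv m h 0 / (m.factorial : ℂ)‖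

open ComplexConjugate

lemma one_sub_ne_zero_of_norm_lt_one {w : ℂ} (hw : ‖w‖ < 1) : 1 - w ≠ 0 := by
  rw [sub_ne_zero]; rintro rfl; simp at hw

lemma one_sub_conj_mul_ne_zero {a z : ℂ} (ha : ‖a‖ < 1) (hz : ‖z‖ ≤ 1) :
    1 - conj a * z ≠ 0 :=
  one_sub_ne_zero_of_norm_lt_one <| by
    rw [norm_mul, RCLike.norm_conj]; nlinarith [norm_nonneg a, norm_nonneg z]

lemma one_sub_conj_blaschkeFactor_mul_blaschkeFactor {a w z : ℂ}
    (hw : 1 - conj a * w ≠ 0) (hz : 1 - conj a * z ≠ 0) :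
    1 - conj (blaschkeFactor a w) * blaschkeFactor a z
      = (1 - ‖a‖ ^ 2 : ℂ) * (1 - conj w * z) / (conj (1 - conj a * w) * (1 - conj a * z)) := by
  have hw' : conj (1 - conj a * w) ≠ 0 := (map_ne_zero _).2 hw
  have hnorm : (‖a‖ ^ 2 : ℂ) = a * conj a := (Complex.mul_conj' a).symm
  simp only [blaschkeFactor, map_div₀, map_sub, map_mul, map_one, Complex.conj_conj] at hw' ⊢
  rw [div_mul_div_comm, one_sub_div (mul_ne_zero hw' hz), hnorm]
  ring

lemma conj_normalizedSzegoKernel_mul {a w z : ℂ} (ha : ‖a‖ ≤ 1) :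
    conj ((Real.sqrt (1 - ‖a‖ ^ 2) : ℂ) / (1 - conj a * w)) *
        ((Real.sqrt (1 - ‖a‖ ^ 2) : ℂ) / (1 - conj a * z))
      = (1 - ‖a‖ ^ 2 : ℂ) / (conj (1 - conj a * w) * (1 - conj a * z)) := by
  have hsq : ((Real.sqrt (1 - ‖a‖ ^ 2) : ℝ) : ℂ) * (Real.sqrt (1 - ‖a‖ ^ 2) : ℂ)
      = 1 - ‖a‖ ^ 2 := by
    rw [← Complex.ofReal_mul, Real.mul_self_sqrt (by nlinarith [norm_nonneg a])]; push_cast; ring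
  rw [map_div₀, Complex.conj_ofReal, div_mul_div_comm, hsq]

noncomputable def blaschkeProd {n : ℕ} (lam : Fin n → ℂ) (m : ℕ) (z : ℂ) : ℂ :=
  ∏ j ∈ Finset.univ.filter (fun j : Fin n => (j : ℕ) < m), blaschkeFactor (lam j) z

lemma blaschkeProd_zero {n : ℕ} (lam : Fin n → ℂ) (z : ℂ) : blaschkeProd lam 0 z = 1 := by
  simp [blaschkeProd]

lemma blaschkeProd_succ {n : ℕ} (lam : Fin n → ℂ) (k : Fin n) (z : ℂ) :
    blaschkeProd lam (k + 1) z = blaschkeProd lam k z * blaschkeFactor (lam k) z := by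
  have : (Finset.univ.filter fun j : Fin n => (j : ℕ) < k + 1)
      = insert k (Finset.univ.filter fun j : Fin n => (j : ℕ) < k) := by
    ext j; simp [Fin.ext_iff, le_iff_eq_or_lt]
  rw [blaschkeProd, this, Finset.prod_insert (by simp), mul_comm, blaschkeProd]

lemma blaschkeProd_lam_eq_zero {n : ℕ} (lam : Fin n → ℂ) (j : Fin n) :
    blaschkeProd lam n (lam j) = 0 :=
  Finset.prod_eq_zero (i := j) (by simp) (by simp [blaschkeFactor])

lemma malmquist_eq_blaschkeProd_mul {n : ℕ} (lam : Fin n → ℂ) (k : Fin n) (z : ℂ) :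
    malmquist lam k z = blaschkeProd lam k z *
      ((Real.sqrt (1 - ‖lam k‖ ^ 2) : ℂ) / (1 - conj (lam k) * z)) := by
  rw [malmquist, blaschkeProd]
  congr 2
  ext j; simp

lemma one_sub_conj_mul_mul_conj_malmquist_mul_malmquist {n : ℕ} {lam : Fin n → ℂ} {w z : ℂ}
    (k : Fin n) (hk : ‖lam k‖ ≤ 1) (hw : 1 - conj (lam k) * w ≠ 0)
    (hz : 1 - conj (lam k) * z ≠ 0) :
    (1 - conj w * z) * (conj (malmquist lam k w) * malmquist lam k z)
      = conj (blaschkeProd lam k w) * blaschkeProd lam k z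
        - conj (blaschkeProd lam (k + 1) w) * blaschkeProd lam (k + 1) z := by
  simp only [malmquist_eq_blaschkeProd_mul, blaschkeProd_succ]
  have h1 := one_sub_conj_blaschkeFactor_mul_blaschkeFactor hw hz
  have h2 := conj_normalizedSzegoKernel_mul (w := w) (z := z) hk
  simp only [map_mul] at h2 ⊢
  linear_combination (1 - conj w * z) * conj (blaschkeProd lam k w) * blaschkeProd lam k z * h2
    - conj (blaschkeProd lam k w) * blaschkeProd lam k z * h1

theorem sum_conj_malmquist_mul_malmquist {n : ℕ} {lam : Fin n → ℂ} (hlam : ∀ k, ‖lam k‖ < 1)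
    (j : Fin n) {z : ℂ} (hz : ∀ k, 1 - conj (lam k) * z ≠ 0) :
    ∑ k, conj (malmquist lam k (lam j)) * malmquist lam k z = 1 / (1 - conj (lam j) * z) := by
  set f : ℕ → ℂ := fun m => conj (blaschkeProd lam m (lam j)) * blaschkeProd lam m z
  have htelescope : (1 - conj (lam j) * z) *
      ∑ k, conj (malmquist lam k (lam j)) * malmquist lam k z = 1 := by
    rw [Finset.mul_sum]
    calc ∑ k : Fin n, (1 - conj (lam j) * z) *
          (conj (malmquist lam k (lam j)) * malmquist lam k z)
        = ∑ k : Fin n, (f k - f (k + 1)) :=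
          Finset.sum_congr rfl fun k _ => one_sub_conj_mul_mul_conj_malmquist_mul_malmquist k
            (hlam k).le (one_sub_conj_mul_ne_zero (hlam k) (hlam j).le) (hz k)
      _ = f 0 - f n := by rw [Fin.sum_univ_eq_sum_range (fun k => f k - f (k + 1)),
          Finset.sum_range_sub']
      _ = 1 := by simp [f, blaschkeProd_zero, blaschkeProd_lam_eq_zero]
  rw [eq_div_iff (hz j), mul_comm, htelescope]

lemma differentiableAt_malmquist {n : ℕ} {lam : Fin n → ℂ} (k : Fin n) {z : ℂ}
    (hz : ∀ j, 1 - conj (lam j) * z ≠ 0) : DifferentiableAt ℂ (malmquist lam k) z := by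
  unfold malmquist blaschkeFactor
  fun_prop (disch := exact hz _)

lemma continuousOn_malmquist_sphere {n : ℕ} {lam : Fin n → ℂ} (hlam : ∀ k, ‖lam k‖ < 1)
    (k : Fin n) : ContinuousOn (malmquist lam k) (Metric.sphere 0 1) := fun _ hz =>
  (differentiableAt_malmquist k fun j => one_sub_conj_mul_ne_zero (hlam j)
    (mem_sphere_zero_iff_norm.1 hz).le).continuousAt.continuousWithinAt

lemma ContinuousOn.continuous_comp_exp_mul_I {u : ℂ → ℂ} (hu : ContinuousOn u (Metric.sphere 0 1)) :
    Continuous fun θ : ℝ => u (Complex.exp (θ * Complex.I)) :=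
  hu.comp_continuous (by fun_prop) fun θ => by simp

lemma h2inner_congr_right {u v v' : ℂ → ℂ} (h : Set.EqOn v v' (Metric.sphere 0 1)) :
    h2inner u v = h2inner u v' := by
  unfold h2inner
  congr 2 with θ
  rw [h (by simp)]

lemma h2inner_sum_right {ι : Type*} (s : Finset ι) {u : ℂ → ℂ}
    (hu : ContinuousOn u (Metric.sphere 0 1)) (c : ι → ℂ) {v : ι → ℂ → ℂ}
    (hv : ∀ i ∈ s, ContinuousOn (v i) (Metric.sphere 0 1)) :
    h2inner u (fun z => ∑ i ∈ s, c i * v i z) = ∑ i ∈ s, conj (c i) * h2inner u (v i) := by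
  have hint : ∀ i ∈ s, IntervalIntegrable (fun θ : ℝ => conj (c i) *
      (u (Complex.exp (θ * Complex.I)) * conj (v i (Complex.exp (θ * Complex.I)))))
      MeasureTheory.volume 0 (2 * π) := fun i hi =>
    (continuous_const.mul (hu.continuous_comp_exp_mul_I.mul
      (hv i hi).continuous_comp_exp_mul_I.star)).intervalIntegrable _ _
  simp only [h2inner, map_sum, map_mul, Finset.mul_sum, mul_smul_comm, ← Finset.smul_sum,
    ← intervalIntegral.integral_const_mul]
  rw [← intervalIntegral.integral_finsetSum hint]
  congr 2 with θ
  exact Finset.sum_congr rfl fun _ _ => by ring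

theorem h2inner_szegoKernel {g : ℂ → ℂ} (hg : DiffContOnCl ℂ g (Metric.ball 0 1)) {w : ℂ}
    (hw : ‖w‖ < 1) : h2inner g (fun z => 1 / (1 - conj w * z)) = g w := by
  have hcauchy := hg.circleIntegral_sub_inv_smul (mem_ball_zero_iff.2 hw)
  simp only [circleIntegral, deriv_circleMap, circleMap_zero, Complex.ofReal_one, one_mul,
    smul_eq_mul] at hcauchy
  have hpoint : ∀ θ : ℝ, g (Complex.exp (θ * Complex.I)) *
      conj (1 / (1 - conj w * Complex.exp (θ * Complex.I)))
      = Complex.I⁻¹ * (Complex.exp (θ * Complex.I) * Complex.I *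
        ((Complex.exp (θ * Complex.I) - w)⁻¹ * g (Complex.exp (θ * Complex.I)))) := by
    intro θ
    set e := Complex.exp (θ * Complex.I)
    have he : ‖e‖ = 1 := Complex.norm_exp_ofReal_mul_I θ
    have he0 : e ≠ 0 := Complex.exp_ne_zero _
    have hew : e - w ≠ 0 := by
      rw [sub_ne_zero]; rintro rfl; exact hw.ne he
    -- on the circle `conj e = e⁻¹`, which turns the conjugated Szegő kernel into `e / (e - w)`
    rw [map_div₀, map_one, map_sub, map_one, map_mul, Complex.conj_conj,
      ← Complex.inv_eq_conj he]
    field_simp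
  unfold h2inner
  simp_rw [hpoint, intervalIntegral.integral_const_mul, hcauchy, Complex.real_smul]
  push_cast
  field_simp [Complex.I_ne_zero, Real.pi_ne_zero]

theorem projMalmquist_apply_lam {n : ℕ} {lam : Fin n → ℂ} (hlam : ∀ k, ‖lam k‖ < 1)
    {g : ℂ → ℂ} (hg : DiffContOnCl ℂ g (Metric.ball 0 1)) (j : Fin n) :
    projMalmquist lam g (lam j) = g (lam j) := by
  have hg_sphere : ContinuousOn g (Metric.sphere 0 1) :=
    hg.continuousOn.mono (by rw [closure_ball 0 one_ne_zero]; exact Metric.sphere_subset_closedBall)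
  calc projMalmquist lam g (lam j)
      = ∑ k, conj (conj (malmquist lam k (lam j))) * h2inner g (malmquist lam k) := by
        simp only [projMalmquist, Complex.conj_conj, mul_comm]
    _ = h2inner g (fun z => ∑ k, conj (malmquist lam k (lam j)) * malmquist lam k z) :=
        (h2inner_sum_right _ hg_sphere _ fun k _ => continuousOn_malmquist_sphere hlam k).symm
    _ = h2inner g (fun z => 1 / (1 - conj (lam j) * z)) := h2inner_congr_right fun z hz =>
        sum_conj_malmquist_mul_malmquist hlam j fun k =>
          one_sub_conj_mul_ne_zero (hlam k) (mem_sphere_zero_iff_norm.1 hz).le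
    _ = g (lam j) := h2inner_szegoKernel hg (hlam j)

lemma differentiableAt_projMalmquist {n : ℕ} {lam : Fin n → ℂ} (g : ℂ → ℂ) {z : ℂ}
    (hz : ∀ j, 1 - conj (lam j) * z ≠ 0) : DifferentiableAt ℂ (projMalmquist lam g) z := by
  unfold projMalmquist
  have := fun k => differentiableAt_malmquist (lam := lam) k hz
  fun_prop

lemma differentiableOn_projMalmquist_ball {n : ℕ} {lam : Fin n → ℂ} (g : ℂ → ℂ) {R : ℝ}
    (hR : ∀ k, ‖lam k‖ * R < 1) : DifferentiableOn ℂ (projMalmquist lam g) (Metric.ball 0 R) :=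
  fun z hz => (differentiableAt_projMalmquist g fun k => one_sub_ne_zero_of_norm_lt_one <| by
    rw [norm_mul, RCLike.norm_conj]
    exact (mul_le_mul_of_nonneg_left (mem_ball_zero_iff.1 hz).le (norm_nonneg _)).trans_lt
      (hR k)).differentiableWithinAt

lemma diffContOnCl_one_div_one_sub_div_pow {μ : ℂ} (hμ : 1 < ‖μ‖) (l : ℕ) :
    DiffContOnCl ℂ (fun z => (1 / (1 - z / μ)) ^ l) (Metric.ball 0 1) := by
  refine DifferentiableOn.diffContOnCl fun z hz => ?_
  rw [closure_ball 0 one_ne_zero, mem_closedBall_zero_iff] at hz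
  have hzμ : 1 - z / μ ≠ 0 := one_sub_ne_zero_of_norm_lt_one <| by
    rw [norm_div, div_lt_one (by linarith)]
    linarith
  exact DifferentiableAt.differentiableWithinAt (by fun_prop (disch := exact hzμ))

lemma exists_one_lt_forall_mul_lt_one {ι : Type*} [Finite ι] {x : ι → ℝ} (hx : ∀ i, x i < 1) :
    ∃ R > 1, ∀ i, x i * R < 1 := by
  have hnear : ∀ᶠ R in nhds (1 : ℝ), ∀ i, x i * R < 1 := Filter.eventually_all.2 fun i =>
    (continuous_const.mul continuous_id).continuousAt.eventually_lt continuousAt_const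
      (by simpa using hx i)
  obtain ⟨R, hR, hR1⟩ := ((hnear.filter_mono nhdsWithin_le_nhds).and
    (self_mem_nhdsWithin : Set.Ioi (1 : ℝ) ∈ nhdsWithin 1 (Set.Ioi 1))).exists
  exact ⟨R, hR1, hR⟩

lemma hasSum_taylorCoeff_mul_pow {f : ℂ → ℂ} {R : ℝ} (hf : DifferentiableOn ℂ f (Metric.ball 0 R))
    {z : ℂ} (hz : ‖z‖ < R) :
    HasSum (fun m => iteratedDeriv m f 0 / m.factorial * z ^ m) (f z) := by
  have htaylor := Complex.hasSum_taylorSeries_on_ball hf (mem_ball_zero_iff.2 hz)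
  simp only [sub_zero, smul_eq_mul] at htaylor
  have hterm (m : ℕ) : iteratedDeriv m f 0 / m.factorial * z ^ m
      = (m.factorial : ℂ)⁻¹ * (z ^ m * iteratedDeriv m f 0) := by ring
  simpa only [hterm] using htaylor

lemma summable_norm_taylorCoeff {f : ℂ → ℂ} {R : ℝ} (hf : DifferentiableOn ℂ f (Metric.ball 0 R))
    (hR : 1 < R) : Summable fun m => ‖iteratedDeriv m f 0 / m.factorial‖ :=
  summable_norm_iff.2 <| by
    simpa using (hasSum_taylorCoeff_mul_pow hf (z := 1) (by simpa using hR)).summable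

section PowerSeries

variable {𝕜 A : Type*} [NormedField 𝕜] [NormedRing A] [NormedAlgebra 𝕜 A] {a : ℕ → 𝕜} {x : A}
  {C : ℝ}

lemma norm_smul_pow_le (hC : ∀ m, ‖x ^ m‖ ≤ C) (m : ℕ) : ‖a m • x ^ m‖ ≤ ‖a m‖ * C := by
  rw [norm_smul]
  exact mul_le_mul_of_nonneg_left (hC m) (norm_nonneg _)

lemma summable_smul_pow [CompleteSpace A] (ha : Summable fun m => ‖a m‖)
    (hC : ∀ m, ‖x ^ m‖ ≤ C) : Summable fun m => a m • x ^ m :=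
  (ha.mul_right C).of_norm_bounded (norm_smul_pow_le hC)

lemma norm_tsum_smul_pow_le (ha : Summable fun m => ‖a m‖) (hC : ∀ m, ‖x ^ m‖ ≤ C) :
    ‖∑' m, a m • x ^ m‖ ≤ (∑' m, ‖a m‖) * C :=
  tsum_of_norm_bounded (ha.hasSum.mul_right C) (norm_smul_pow_le hC)

end PowerSeries

section Eigenvectors

variable {𝕜 E : Type*} [NontriviallyNormedField 𝕜] [NormedAddCommGroup E] [NormedSpace 𝕜 E]

lemma ContinuousLinearMap.pow_apply_of_apply_eq_smul {T : E →L[𝕜] E} {v : E} {c : 𝕜}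
    (hv : T v = c • v) (m : ℕ) : (T ^ m) v = c ^ m • v := by
  induction m with
  | zero => simp
  | succ m ih => rw [pow_succ', mul_apply_eq_comp, ih, map_smul, hv, smul_smul, pow_succ]

lemma ContinuousLinearMap.tsum_smul_pow_apply_of_apply_eq_smul {T : E →L[𝕜] E} {v : E} {c s : 𝕜}
    {a : ℕ → 𝕜} (hv : T v = c • v) (hs : HasSum (fun m => a m * c ^ m) s)
    (ha : Summable fun m => a m • T ^ m) : (∑' m, a m • T ^ m) v = s • v :=
  (ha.hasSum.mapL (ContinuousLinearMap.apply 𝕜 E v)).unique <| by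
    simpa [pow_apply_of_apply_eq_smul hv, smul_smul] using hs.smul_const v

lemma resolvent_apply_of_apply_eq_smul {T : E →L[𝕜] E} {v : E} {c μ : 𝕜} (hv : T v = c • v)
    (hμ : IsUnit (algebraMap 𝕜 (E →L[𝕜] E) μ - T)) : resolvent T μ v = (μ - c)⁻¹ • v := by
  have hsub : (algebraMap 𝕜 (E →L[𝕜] E) μ - T) v = (μ - c) • v := by
    simp [Algebra.algebraMap_eq_smul_one, hv, sub_smul]
  have hinv := congr($(Ring.inverse_mul_cancel _ hμ) v)
  simp only [mul_apply_eq_comp, hsub, map_smul, one_apply_eq_self] at hinv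
  rcases eq_or_ne (μ - c) 0 with hc | hc
  · rw [hc, zero_smul] at hinv
    simp [← hinv]
  · rw [resolvent, eq_inv_smul_iff₀ hc, hinv]

end Eigenvectors

lemma exists_basis_apply_eq_smul {𝕜 E : Type*} [NontriviallyNormedField 𝕜] [CompleteSpace 𝕜]
    [NormedAddCommGroup E] [NormedSpace 𝕜 E] {n : ℕ} (hn : 1 ≤ n)
    (hdim : Module.finrank 𝕜 E = n) {T : E →L[𝕜] E} {lam : Fin n → 𝕜}
    (hinj : Function.Injective lam) (hspec : ∀ j, lam j ∈ spectrum 𝕜 T) :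
    ∃ b : Module.Basis (Fin n) 𝕜 E, ∀ j, T (b j) = lam j • b j := by
  have : FiniteDimensional 𝕜 E := Module.finite_of_finrank_pos (by omega)
  have : Nonempty (Fin n) := ⟨⟨0, hn⟩⟩
  have hspec' : ∀ j, lam j ∈ spectrum 𝕜 (T : E →ₗ[𝕜] E) := fun j => by
    rw [← AlgEquiv.spectrum_eq (Module.End.toContinuousLinearMap E)]
    exact hspec j
  choose v hv using fun j =>
    (Module.End.hasEigenvalue_iff_mem_spectrum.2 (hspec' j)).exists_hasEigenvector
  have hli : LinearIndependent 𝕜 v := Module.End.eigenvectors_linearIndependent' _ lam hinj v hv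
  refine ⟨basisOfLinearIndependentOfCardEqFinrank hli (by simp [hdim]), fun j => ?_⟩
  simpa using (hv j).apply_eq_smul

lemma inv_sub_eq_inv_mul_one_div {𝕜 : Type*} [Field 𝕜] {μ : 𝕜} (hμ : μ ≠ 0) (c : 𝕜) :
    (μ - c)⁻¹ = μ⁻¹ * (1 / (1 - c / μ)) := by
  rw [one_sub_div hμ, one_div_div, ← mul_div_assoc, inv_mul_cancel₀ hμ, one_div]

theorem resolvent_pow_eq_smul_tsum {𝕜 E ι : Type*} [NontriviallyNormedField 𝕜]
    [NormedAddCommGroup E] [NormedSpace 𝕜 E] {T : E →L[𝕜] E} {lam : ι → 𝕜}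
    (b : Module.Basis ι 𝕜 E) (hb : ∀ j, T (b j) = lam j • b j) {μ : 𝕜} (hμ : μ ≠ 0)
    (hunit : IsUnit (algebraMap 𝕜 (E →L[𝕜] E) μ - T)) (l : ℕ) {a : ℕ → 𝕜}
    (ha : Summable fun m => a m • T ^ m)
    (hsum : ∀ j, HasSum (fun m => a m * lam j ^ m) ((1 / (1 - lam j / μ)) ^ l)) :
    resolvent T μ ^ l = μ⁻¹ ^ l • ∑' m, a m • T ^ m := by
  refine ContinuousLinearMap.coe_injective (b.ext fun j => ?_)
  simp only [ContinuousLinearMap.coe_coe, smul_apply, smul_smul,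
    ContinuousLinearMap.pow_apply_of_apply_eq_smul (resolvent_apply_of_apply_eq_smul (hb j) hunit),
    ContinuousLinearMap.tsum_smul_pow_apply_of_apply_eq_smul (hb j) (hsum j) ha,
    inv_sub_eq_inv_mul_one_div hμ, mul_pow]

theorem iterated_resolvent_le_proj_wiener_general
    (l n : ℕ) (hn : 1 ≤ n)
    (E : Type) [NormedAddCommGroup E] [NormedSpace ℂ E]
    (hdim : Module.finrank ℂ E = n)
    (T : E →L[ℂ] E)
    (hpb : ∃ C : ℝ, ∀ k : ℕ, ‖T ^ k‖ ≤ C)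
    (lam : Fin n → ℂ) (hinj : Function.Injective lam)
    (hspec : spectrum ℂ T = Set.range lam)
    (hmod : ∀ j, ‖lam j‖ < 1)
    (μ : ℂ) (hμ : 1 < ‖μ‖) :
    ‖(Ring.inverse (algebraMap ℂ (E →L[ℂ] E) μ - T)) ^ l‖
      ≤ (⨆ k : ℕ, ‖T ^ k‖) * ‖μ‖⁻¹ ^ l *
        wienerNorm (projMalmquist lam fun z => (1 / (1 - z / μ)) ^ l) := by
  have : FiniteDimensional ℂ E := Module.finite_of_finrank_pos (by omega)
  obtain ⟨b, hb⟩ := exists_basis_apply_eq_smul hn hdim hinj fun j => hspec ▸ Set.mem_range_self j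
  have hunit : IsUnit (algebraMap ℂ (E →L[ℂ] E) μ - T) := spectrum.notMem_iff.1 <| by
    rw [hspec]
    rintro ⟨j, rfl⟩
    linarith [hmod j]
  obtain ⟨R, hR, hlamR⟩ := exists_one_lt_forall_mul_lt_one hmod
  set h := projMalmquist lam fun z => (1 / (1 - z / μ)) ^ l
  have hh : DifferentiableOn ℂ h (Metric.ball 0 R) := differentiableOn_projMalmquist_ball _ hlamR
  set a : ℕ → ℂ := fun m => iteratedDeriv m h 0 / m.factorial
  have ha : Summable fun m => ‖a m‖ := summable_norm_taylorCoeff hh hR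
  obtain ⟨C, hC⟩ := hpb
  have hpow : ∀ m, ‖T ^ m‖ ≤ ⨆ k : ℕ, ‖T ^ k‖ := le_ciSup ⟨C, Set.forall_mem_range.2 hC⟩
  have hres : resolvent T μ ^ l = μ⁻¹ ^ l • ∑' m, a m • T ^ m :=
    resolvent_pow_eq_smul_tsum b hb (norm_pos_iff.1 (by linarith)) hunit l
      (summable_smul_pow ha hpow) fun j =>
        projMalmquist_apply_lam hmod (diffContOnCl_one_div_one_sub_div_pow hμ l) j ▸
          hasSum_taylorCoeff_mul_pow hh ((hmod j).trans hR)
  calc ‖resolvent T μ ^ l‖ = ‖μ‖⁻¹ ^ l * ‖∑' m, a m • T ^ m‖ := by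
        rw [hres, norm_smul, norm_pow, norm_inv]
    _ ≤ ‖μ‖⁻¹ ^ l * ((∑' m, ‖a m‖) * ⨆ k : ℕ, ‖T ^ k‖) := by
        gcongr
        exact norm_tsum_smul_pow_le ha hpow
    _ = _ := by rw [wienerNorm]; ring

/-- For a power bounded `T` on `(ℂⁿ, |·|)` with `n` distinct eigenvalues
`λ_1, …, λ_n ∈ 𝔻` and `|λ| > 1`,
`‖(λI - T)⁻ˡ‖ ≤ P(T) · |λ|^{-l} · ‖P_{B_σ}((k_{1/λ̄})ˡ)‖_W` where `k_{1/λ̄}(z) = 1/(1 - z/λ)`. -/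
theorem iterated_resolvent_le_proj_wiener
    (l n : ℕ) (hl : 1 ≤ l) (hn : 1 ≤ n)
    (E : Type) [NormedAddCommGroup E] [NormedSpace ℂ E]
    (hdim : Module.finrank ℂ E = n)
    (T : E →L[ℂ] E)
    (hpb : ∃ C : ℝ, ∀ k : ℕ, ‖T ^ k‖ ≤ C)
    (lam : Fin n → ℂ) (hinj : Function.Injective lam)
    (hspec : spectrum ℂ T = Set.range lam)
    (hmod : ∀ j, ‖lam j‖ < 1)
    (μ : ℂ) (hμ : 1 < ‖μ‖) :
    ‖(Ring.inverse (algebraMap ℂ (E →L[ℂ] E) μ - T)) ^ l‖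
      ≤ (⨆ k : ℕ, ‖T ^ k‖) * ‖μ‖⁻¹ ^ l *
        wienerNorm (projMalmquist lam fun z => (1 / (1 - z / μ)) ^ l) :=
  iterated_resolvent_le_proj_wiener_general l n hn E hdim T hpb lam hinj hspec hmod μ hμ
end

section
/- Let n ≥ 1, l ≥ 1, let |·| be a norm on ℂ^n, and let C > 0 be a constant such that: for every power bounded linear operator T on (ℂ^n, |·|) with σ(T) ⊂ 𝔻 and every λ⋆ ∈ ℂ with |λ⋆| = 1, one has dist(λ⋆, σ(T))^l · ‖R^l(λ⋆, T)‖ ≤ C · P(T). Then ρ^{strong,l}(T) ≤ C · P(T) for every power bounded linear operator T on (ℂ^n, |·|). -/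
/-!
For `t ∈ (0, 1)` the operator `(t / |z|) • T` is power bounded with `P((t / |z|) • T) ≤ P(T)`
and has its spectrum in `𝔻`, while `dist(λ, σ(S))^l ‖R^l(λ, S)‖` is invariant under scaling `λ`
and `S` by the same nonzero factor. Applying the hypothesis at `λ⋆ = z / |z|` thus bounds this
quantity for `t • T` at `z`. Letting `t → 1⁻` gives the claim: the resolvent of `t • T` at `z`
is continuous in `t`, and since `σ(T)` lies in the closed unit disc,
`dist(z, t σ(T)) ≥ dist(z, σ(T)) - (1 - t)`.
-/

open Metric Filter Topology Pointwise

theorem Ring.inverse_smul_of_ne_zero {𝕜 A : Type*} [Field 𝕜] [Ring A] [Algebra 𝕜 A] {c : 𝕜}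
    (hc : c ≠ 0) (x : A) : Ring.inverse (c • x) = c⁻¹ • Ring.inverse x := by
  have hunit : IsUnit (algebraMap 𝕜 A c) := (isUnit_iff_ne_zero.2 hc).map _
  have hinv : Ring.inverse (algebraMap 𝕜 A c) = algebraMap 𝕜 A c⁻¹ := by
    rw [← mul_one (Ring.inverse _), Ring.inverse_mul_eq_iff_eq_mul _ _ _ hunit, ← map_mul,
      mul_inv_cancel₀ hc, map_one]
  rw [Algebra.smul_def, Ring.inverse_mul (.inl hunit), hinv, ← Algebra.commutes,
    ← Algebra.smul_def]

theorem infDist_sub_le_infDist_ofReal_smul {s : Set ℂ} (hs : s ⊆ closedBall 0 1) {t : ℝ}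
    (ht : t ≤ 1) (z : ℂ) : infDist z s - (1 - t) ≤ infDist z ((t : ℂ) • s) := by
  rcases s.eq_empty_or_nonempty with rfl | hne
  · simp [ht]
  refine (le_infDist hne.smul_set).2 ?_
  rintro _ ⟨μ, hμ, rfl⟩
  have hmove : dist ((t : ℂ) • μ) μ ≤ 1 - t := by
    have hμ1 : ‖μ‖ ≤ 1 := mem_closedBall_zero_iff.1 (hs hμ)
    rw [dist_eq_norm, smul_eq_mul, ← sub_one_mul, norm_mul, ← Complex.ofReal_one,
      ← Complex.ofReal_sub, Complex.norm_real, Real.norm_of_nonpos (by linarith)]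
    nlinarith
  linarith [infDist_le_dist_of_mem (x := z) hμ, dist_triangle z ((t : ℂ) • μ) μ]

variable {A : Type*} [NormedRing A]

def IsPowerBounded (a : A) : Prop :=
  ∃ c : ℝ, ∀ k : ℕ, ‖a ^ k‖ ≤ c

theorem IsPowerBounded.bddAbove {a : A} (ha : IsPowerBounded a) :
    BddAbove (Set.range fun k => ‖a ^ k‖) := by
  obtain ⟨c, hc⟩ := ha
  exact ⟨c, by rintro _ ⟨k, rfl⟩; exact hc k⟩

variable [NormedAlgebra ℂ A]

theorem spectrum_smul_of_ne_zero {c : ℂ} (hc : c ≠ 0) (a : A) :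
    spectrum ℂ (c • a) = c • spectrum ℂ a :=
  spectrum.unit_smul_eq_smul a (Units.mk0 c hc)

noncomputable def distResolventPow (l : ℕ) (a : A) (z : ℂ) : ℝ :=
  infDist z (spectrum ℂ a) ^ l * ‖(Ring.inverse (algebraMap ℂ A z - a)) ^ l‖

theorem distResolventPow_smul (l : ℕ) (a : A) (z : ℂ) {c : ℂ} (hc : c ≠ 0) :
    distResolventPow l (c • a) (c • z) = distResolventPow l a z := by
  have hres : algebraMap ℂ A (c • z) - c • a = c • (algebraMap ℂ A z - a) := by
    rw [smul_sub, smul_eq_mul, map_mul, ← Algebra.smul_def]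
  rw [distResolventPow, distResolventPow, spectrum_smul_of_ne_zero hc, infDist_smul₀ hc, hres,
    Ring.inverse_smul_of_ne_zero hc, smul_pow, norm_smul, norm_pow, norm_inv, mul_pow, inv_pow]
  field_simp

theorem tendsto_norm_ringInverse_sub_ofReal_smul_pow [CompleteSpace A] {a : A} {z : ℂ}
    (hz : z ∉ spectrum ℂ a) (l : ℕ) :
    Tendsto (fun t : ℝ => ‖Ring.inverse (algebraMap ℂ A z - (t : ℂ) • a) ^ l‖) (𝓝 1)
      (𝓝 ‖Ring.inverse (algebraMap ℂ A z - a) ^ l‖) := by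
  obtain ⟨u, hu⟩ := spectrum.notMem_iff.1 hz
  have hinv : ContinuousAt Ring.inverse (algebraMap ℂ A z - a) :=
    hu ▸ NormedRing.inverse_continuousAt u
  have hlin : Tendsto (fun t : ℝ => algebraMap ℂ A z - (t : ℂ) • a) (𝓝 1)
      (𝓝 (algebraMap ℂ A z - a)) :=
    (by fun_prop : Continuous fun t : ℝ => algebraMap ℂ A z - (t : ℂ) • a).tendsto' 1 _
      (by simp)
  exact ((hinv.tendsto.comp hlin).pow l).norm

namespace IsPowerBounded

variable {a : A}

theorem norm_smul_pow_le {c : ℂ} (hc : ‖c‖ ≤ 1) (a : A) (k : ℕ) : ‖(c • a) ^ k‖ ≤ ‖a ^ k‖ := by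
  rw [smul_pow, norm_smul, norm_pow]
  exact mul_le_of_le_one_left (norm_nonneg _) (pow_le_one₀ (norm_nonneg c) hc)

theorem smul (ha : IsPowerBounded a) {c : ℂ} (hc : ‖c‖ ≤ 1) : IsPowerBounded (c • a) := by
  obtain ⟨b, hb⟩ := ha
  exact ⟨b, fun k => (norm_smul_pow_le hc a k).trans (hb k)⟩

theorem iSup_norm_smul_pow_le (ha : IsPowerBounded a) {c : ℂ} (hc : ‖c‖ ≤ 1) :
    ⨆ k : ℕ, ‖(c • a) ^ k‖ ≤ ⨆ k : ℕ, ‖a ^ k‖ :=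
  ciSup_mono ha.bddAbove (norm_smul_pow_le hc a)

theorem spectrum_subset_closedBall [CompleteSpace A] (ha : IsPowerBounded a) :
    spectrum ℂ a ⊆ closedBall 0 1 := by
  intro μ hμ
  rw [mem_closedBall_zero_iff]
  by_contra! hμ1
  refine not_bddAbove_of_tendsto_atTop (tendsto_pow_atTop_atTop_of_one_lt hμ1) ?_
  obtain ⟨c, hc⟩ := ha
  refine ⟨c * ‖(1 : A)‖, ?_⟩
  rintro _ ⟨k, rfl⟩
  calc ‖μ‖ ^ k = ‖μ ^ k‖ := (norm_pow μ k).symm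
    _ ≤ ‖a ^ k‖ * ‖(1 : A)‖ := spectrum.norm_le_norm_mul_of_mem (spectrum.pow_mem_pow a k hμ)
    _ ≤ c * ‖(1 : A)‖ := by gcongr; exact hc k

theorem spectrum_smul_subset_ball [CompleteSpace A] (ha : IsPowerBounded a) {c : ℂ}
    (hc0 : c ≠ 0) (hc1 : ‖c‖ < 1) : spectrum ℂ (c • a) ⊆ ball 0 1 := by
  rw [spectrum_smul_of_ne_zero hc0]
  rintro _ ⟨μ, hμ, rfl⟩
  rw [mem_ball_zero_iff, norm_smul]
  exact (mul_le_of_le_one_right (norm_nonneg c)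
    (mem_closedBall_zero_iff.1 (ha.spectrum_subset_closedBall hμ))).trans_lt hc1

end IsPowerBounded

section MaximumPrinciple

variable [CompleteSpace A] {l : ℕ} {C : ℝ} {a : A} {z : ℂ}

theorem distResolventPow_ofReal_smul_le (hC : 0 ≤ C)
    (hyp : ∀ b : A, IsPowerBounded b → spectrum ℂ b ⊆ ball 0 1 →
      ∀ w : ℂ, ‖w‖ = 1 → distResolventPow l b w ≤ C * ⨆ k : ℕ, ‖b ^ k‖)
    (ha : IsPowerBounded a) (hz : 1 ≤ ‖z‖) {t : ℝ} (ht : t ∈ Set.Ioo 0 1) :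
    distResolventPow l ((t : ℂ) • a) z ≤ C * ⨆ k : ℕ, ‖a ^ k‖ := by
  have hz0 : ‖z‖ ≠ 0 := by linarith
  have hr : (‖z‖ : ℂ)⁻¹ ≠ 0 := by simpa using hz0
  set s : ℂ := (‖z‖ : ℂ)⁻¹ * t
  have hs0 : s ≠ 0 := mul_ne_zero hr (by simp [ht.1.ne'])
  have hs1 : ‖s‖ < 1 := by
    rw [norm_mul, norm_inv, Complex.norm_real, norm_norm, Complex.norm_real,
      Real.norm_of_nonneg ht.1.le]
    exact (mul_le_of_le_one_left ht.1.le (inv_le_one_of_one_le₀ hz)).trans_lt ht.2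
  have hw : ‖(‖z‖ : ℂ)⁻¹ • z‖ = 1 := by
    rw [norm_smul, norm_inv, Complex.norm_real, norm_norm, inv_mul_cancel₀ hz0]
  rw [← distResolventPow_smul l _ z hr, smul_smul]
  calc distResolventPow l (s • a) ((‖z‖ : ℂ)⁻¹ • z) ≤ C * ⨆ k : ℕ, ‖(s • a) ^ k‖ :=
        hyp _ (ha.smul hs1.le) (ha.spectrum_smul_subset_ball hs0 hs1) _ hw
    _ ≤ C * ⨆ k : ℕ, ‖a ^ k‖ := mul_le_mul_of_nonneg_left (ha.iSup_norm_smul_pow_le hs1.le) hC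

theorem distResolventPow_le_of_forall_norm_eq_one (hC : 0 ≤ C)
    (hyp : ∀ b : A, IsPowerBounded b → spectrum ℂ b ⊆ ball 0 1 →
      ∀ w : ℂ, ‖w‖ = 1 → distResolventPow l b w ≤ C * ⨆ k : ℕ, ‖b ^ k‖)
    (ha : IsPowerBounded a) (hz : 1 ≤ ‖z‖) (hza : z ∉ spectrum ℂ a) :
    distResolventPow l a z ≤ C * ⨆ k : ℕ, ‖a ^ k‖ := by
  set d := infDist z (spectrum ℂ a)
  -- `max · 0` keeps the lower bound for `dist(z, t σ(a))` nonnegative, so that its powers compare.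
  have hd : Tendsto (fun t : ℝ => max (d - (1 - t)) 0) (𝓝 1) (𝓝 d) :=
    (by fun_prop : Continuous fun t : ℝ => max (d - (1 - t)) 0).tendsto' 1 d
      (by simp [d, infDist_nonneg])
  have hlim := (hd.pow l).mul (tendsto_norm_ringInverse_sub_ofReal_smul_pow hza l)
  refine le_of_tendsto (hlim.mono_left (nhdsWithin_le_nhds (s := Set.Iio 1))) ?_
  filter_upwards [Ioo_mem_nhdsLT (show (0 : ℝ) < 1 from one_pos)] with t ht
  calc max (d - (1 - t)) 0 ^ l * ‖Ring.inverse (algebraMap ℂ A z - (t : ℂ) • a) ^ l‖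
      ≤ distResolventPow l ((t : ℂ) • a) z := by
        rw [distResolventPow, spectrum_smul_of_ne_zero (by simp [ht.1.ne'])]
        gcongr
        exact max_le (infDist_sub_le_infDist_ofReal_smul ha.spectrum_subset_closedBall ht.2.le z)
          infDist_nonneg
    _ ≤ C * ⨆ k : ℕ, ‖a ^ k‖ := distResolventPow_ofReal_smul_le hC hyp ha hz ht

end MaximumPrinciple

theorem strong_iterated_maximum_principle_general
    (n l : ℕ) (hn : 1 ≤ n)
    (E : Type) [NormedAddCommGroup E] [NormedSpace ℂ E]
    (hdim : Module.finrank ℂ E = n)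
    (C : ℝ) (hC : 0 < C)
    (hyp : ∀ T : E →L[ℂ] E, (∃ c : ℝ, ∀ k : ℕ, ‖T ^ k‖ ≤ c) →
      spectrum ℂ T ⊆ Metric.ball (0 : ℂ) 1 →
      ∀ lamstar : ℂ, ‖lamstar‖ = 1 →
        Metric.infDist lamstar (spectrum ℂ T) ^ l *
            ‖(Ring.inverse (algebraMap ℂ (E →L[ℂ] E) lamstar - T)) ^ l‖
          ≤ C * (⨆ k : ℕ, ‖T ^ k‖)) :
    ∀ T : E →L[ℂ] E, (∃ c : ℝ, ∀ k : ℕ, ‖T ^ k‖ ≤ c) →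
      ∀ z : ℂ, 1 ≤ ‖z‖ → z ∉ spectrum ℂ T →
        Metric.infDist z (spectrum ℂ T) ^ l *
            ‖(Ring.inverse (algebraMap ℂ (E →L[ℂ] E) z - T)) ^ l‖
          ≤ C * (⨆ k : ℕ, ‖T ^ k‖) := by
  have : FiniteDimensional ℂ E := .of_finrank_pos (by omega)
  have : CompleteSpace E := FiniteDimensional.complete ℂ E
  exact fun T hT z hz hzT => distResolventPow_le_of_forall_norm_eq_one hC.le hyp hT hz hzT

/-- maximum principle. Suppose `C > 0` is such that for every power
bounded operator `T` on `(ℂⁿ, |·|)` with `σ(T) ⊂ 𝔻` and every `|λ⋆| = 1`,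
`dist(λ⋆, σ(T))^l ‖R^l(λ⋆,T)‖ ≤ C · P(T)`. Then `ρ^{strong,l}(T) ≤ C · P(T)` for every
power bounded `T` on `(ℂⁿ, |·|)`, i.e. `dist(z,σ(T))^l ‖R^l(z,T)‖ ≤ C · P(T)` for all
`|z| ≥ 1`, `z ∉ σ(T)`. -/
theorem strong_iterated_maximum_principle
    (n l : ℕ) (hn : 1 ≤ n) (hl : 1 ≤ l)
    (E : Type) [NormedAddCommGroup E] [NormedSpace ℂ E]
    (hdim : Module.finrank ℂ E = n)
    (C : ℝ) (hC : 0 < C)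
    (hyp : ∀ T : E →L[ℂ] E, (∃ c : ℝ, ∀ k : ℕ, ‖T ^ k‖ ≤ c) →
      spectrum ℂ T ⊆ Metric.ball (0 : ℂ) 1 →
      ∀ lamstar : ℂ, ‖lamstar‖ = 1 →
        Metric.infDist lamstar (spectrum ℂ T) ^ l *
            ‖(Ring.inverse (algebraMap ℂ (E →L[ℂ] E) lamstar - T)) ^ l‖
          ≤ C * (⨆ k : ℕ, ‖T ^ k‖)) :
    ∀ T : E →L[ℂ] E, (∃ c : ℝ, ∀ k : ℕ, ‖T ^ k‖ ≤ c) →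
      ∀ z : ℂ, 1 ≤ ‖z‖ → z ∉ spectrum ℂ T →
        Metric.infDist z (spectrum ℂ T) ^ l *
            ‖(Ring.inverse (algebraMap ℂ (E →L[ℂ] E) z - T)) ^ l‖
          ≤ C * (⨆ k : ℕ, ‖T ^ k‖) :=
  strong_iterated_maximum_principle_general n l hn E hdim C hC hyp
end
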